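/- Minimum distance of the quantum code QL_k: for every natural number k ≥ 4, with H_X = H_{L_k} ⊗ I_{3k} and H_Z = G_{L_k} ⊗ H_{L_k^+} over 𝔽₂, every vector v ∈ 𝔽₂^{6k²} satisfying H_X · v = 0 that does not lie in the 𝔽₂-span of the rows of H_Z has Hamming weight at least 4, every vector w ∈ 𝔽₂^{6k²} satisfying H_Z · w = 0 that does not lie in the 𝔽₂-span of the rows of H_X has Hamming weight at least 4, and at least one such vector (of either kind) of Hamming weight exactly 4 exists; i.e., the CSS minimum distance of QL_k equals 4. -/

import Mathlib

/-!
A qubit vector is `vec X` for a matrix `X` with `3k` rows and `2k` columns, and the stabilisers act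
by `H_X · vec X = vec (X H_Lᵀ)` and `H_Z · vec X = vec (H_{L+} X G_Lᵀ)`. Since `G a = (∑ a) 𝟙 + a`,
we have `ker H_L = {(a, G a)}` and `ker H_{L+} = {(a, G a, a)}`, and `G a` is `a` when `a` has even
weight and the complement of `a` otherwise; so both classical codes have distance at least 4 once
`k ≥ 4`.

A nonzero `vec X ∈ ker H_X` has a nonzero row of `X` in `ker H_L`, hence weight at least 4.
If `vec X ∈ ker H_Z` has weight at most 3, every column of `X G_Lᵀ` lies in `ker H_{L+}` and is
supported on at most three rows, so `X G_Lᵀ = 0`; each row of `X` then lies in `ker G_L`, which is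
the row space of `H_L`, so `X = Y H_L` and `vec X = vec Y · H_X`.
Weight 4 is attained by `vec (e (a, a)ᵀ)` with `a = e₀ + e₁` and a suitable unit vector `e`: it
pairs to 1 with `vec (ℓ e'ᵀ)` for a unit vector `e'`, which is orthogonal to the rows of `H_Z`
because `ℓ = (e₀, G e₀, e₀) ∈ ker H_{L+}`.
-/

open Matrix Kronecker

/-- The k×k matrix over 𝔽₂ with 0 on the diagonal and 1 off the diagonal. -/
def Gmat (k : ℕ) : Matrix (Fin k) (Fin k) (ZMod 2) :=
  fun i j => if i = j then 0 else 1

/-- Generator matrix of the code `L_k`: the block matrix `[I_k | G_k]`. -/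
def GLk (k : ℕ) : Matrix (Fin k) (Fin k ⊕ Fin k) (ZMod 2) :=
  Matrix.fromCols 1 (Gmat k)

/-- Parity-check matrix of the code `L_k`: the block matrix `[G_k | I_k]`. -/
def HLk (k : ℕ) : Matrix (Fin k) (Fin k ⊕ Fin k) (ZMod 2) :=
  Matrix.fromCols (Gmat k) 1

/-- Parity-check matrix of the code `L_k^+`:
the block matrix `[[G_k, I_k, 0_k], [I_k, 0_k, I_k]]`. -/
def HLkp (k : ℕ) : Matrix (Fin k ⊕ Fin k) (Fin k ⊕ Fin k ⊕ Fin k) (ZMod 2) :=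
  Matrix.fromRows
    (Matrix.fromCols (Gmat k) (Matrix.fromCols 1 0))
    (Matrix.fromCols 1 (Matrix.fromCols 0 1))

/-- The X-type stabilizer matrix of the quantum code `QL_k`: `H_X = H_{L_k} ⊗ I_{3k}`,
a `3k² × 6k²` matrix over 𝔽₂ (the `3k`-element index set is `Fin k ⊕ Fin k ⊕ Fin k`). -/
def HXq (k : ℕ) :
    Matrix (Fin k × (Fin k ⊕ Fin k ⊕ Fin k))
      ((Fin k ⊕ Fin k) × (Fin k ⊕ Fin k ⊕ Fin k)) (ZMod 2) :=
  HLk k ⊗ₖ (1 : Matrix (Fin k ⊕ Fin k ⊕ Fin k) (Fin k ⊕ Fin k ⊕ Fin k) (ZMod 2))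

/-- The Z-type stabilizer matrix of the quantum code `QL_k`: `H_Z = G_{L_k} ⊗ H_{L_k^+}`,
a `2k² × 6k²` matrix over 𝔽₂. -/
def HZq (k : ℕ) :
    Matrix (Fin k × (Fin k ⊕ Fin k))
      ((Fin k ⊕ Fin k) × (Fin k ⊕ Fin k ⊕ Fin k)) (ZMod 2) :=
  GLk k ⊗ₖ HLkp k

/-- Hamming weight: the number of nonzero coordinates of a vector. -/
def wt {n : Type*} [Fintype n] (v : n → ZMod 2) : ℕ :=
  (Finset.univ.filter fun j => v j ≠ 0).card

section HammingWeight

variable {n : Type*} [Fintype n]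

theorem wt_eq_zero_iff {v : n → ZMod 2} : wt v = 0 ↔ v = 0 := by
  simp [wt, Finset.filter_eq_empty_iff, funext_iff]

theorem sum_eq_wt (v : n → ZMod 2) : ∑ i, v i = (wt v : ZMod 2) := by
  rw [wt, ← Finset.sum_filter_ne_zero, Finset.cast_card]
  exact Finset.sum_congr rfl fun i hi =>
    (by decide : ∀ x : ZMod 2, x ≠ 0 → x = 1) _ (Finset.mem_filter.mp hi).2

theorem wt_add_wt_one_add (v : n → ZMod 2) : wt v + wt (fun i => 1 + v i) = Fintype.card n := by
  have h : ∀ i, 1 + v i ≠ 0 ↔ ¬ v i ≠ 0 := fun i =>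
    (by decide : ∀ x : ZMod 2, 1 + x ≠ 0 ↔ ¬ x ≠ 0) (v i)
  rw [wt, wt, Finset.filter_congr fun i _ => h i, Finset.card_filter_add_card_filter_not,
    Finset.card_univ]

theorem wt_sumElim {m : Type*} [Fintype m] (a : n → ZMod 2) (b : m → ZMod 2) :
    wt (Sum.elim a b) = wt a + wt b := by
  simp only [wt, Finset.card_filter, Fintype.sum_sum_type, Sum.elim_inl, Sum.elim_inr]
  rfl

theorem wt_le_wt_of_forall_exists {m : Type*} [Fintype m]
    {u : n → ZMod 2} {v : m → ZMod 2} (f : m → n) (h : ∀ x, u x ≠ 0 → ∃ y, v y ≠ 0 ∧ f y = x) :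
    wt u ≤ wt v := by
  classical
  exact calc wt u ≤ ((Finset.univ.filter fun y => v y ≠ 0).image f).card :=
        Finset.card_le_card fun x hx => by simpa using h x (Finset.mem_filter.mp hx).2
    _ ≤ wt v := Finset.card_image_le

theorem wt_single [DecidableEq n] (i : n) : wt (Pi.single i 1) = 1 := by
  simp [wt, Pi.single_apply, Finset.filter_eq']

theorem wt_single_add_single [DecidableEq n] {i j : n} (hij : i ≠ j) :
    wt (Pi.single i 1 + Pi.single j 1) = 2 := by
  have hsupp : (Finset.univ.filter fun x => (Pi.single i 1 + Pi.single j 1 : n → ZMod 2) x ≠ 0) =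
      {i, j} := by
    ext x
    by_cases hi : x = i <;> by_cases hj : x = j <;> simp [Pi.single_apply, hi, hj, hij, hij.symm]
  rw [wt, hsupp, Finset.card_pair hij]

end HammingWeight

theorem Gmat_transpose (k : ℕ) : (Gmat k)ᵀ = Gmat k := by
  ext i j; simp [Gmat, eq_comm]

theorem Gmat_mulVec (k : ℕ) (a : Fin k → ZMod 2) : Gmat k *ᵥ a = fun i => (∑ j, a j) + a i := by
  ext i
  have h : ∀ j, Gmat k i j * a j = a j + if i = j then a j else 0 := fun j => by
    by_cases hij : i = j <;> simp [Gmat, hij, CharTwo.add_self_eq_zero]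
  simp [mulVec, dotProduct, h, Finset.sum_add_distrib]

theorem four_le_wt_add_wt_Gmat_mulVec {k : ℕ} (hk : 4 ≤ k) {a : Fin k → ZMod 2} (ha : a ≠ 0) :
    4 ≤ wt a + wt (Gmat k *ᵥ a) := by
  rw [Gmat_mulVec]
  rcases (by decide : ∀ x : ZMod 2, x = 0 ∨ x = 1) (∑ j, a j) with hsum | hsum
  · obtain ⟨m, hm⟩ : Even (wt a) := by
      rw [← ZMod.natCast_eq_zero_iff_even, ← sum_eq_wt, hsum]
    have : wt a ≠ 0 := wt_eq_zero_iff.not.mpr ha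
    rw [show (fun i => ∑ j, a j + a i) = a by simp [hsum]]
    omega
  · rw [hsum, wt_add_wt_one_add, Fintype.card_fin]
    exact hk

theorem Gmat_mulVec_single_add_single {k : ℕ} (i j : Fin k) :
    Gmat k *ᵥ (Pi.single i 1 + Pi.single j 1) = Pi.single i 1 + Pi.single j 1 := by
  have hsum : ∑ x, (Pi.single i 1 + Pi.single j 1 : Fin k → ZMod 2) x = 0 := by
    simp only [Pi.add_apply, Finset.sum_add_distrib, Finset.sum_pi_single', Finset.mem_univ,
      if_true]
    decide
  rw [Gmat_mulVec, hsum]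
  simp only [zero_add]

theorem add_eq_zero_iff_eq_of_zmod_two {G : Type*} [AddCommGroup G] [Module (ZMod 2) G]
    {x y : G} : x + y = 0 ↔ x = y := by
  rw [add_eq_zero_iff_eq_neg, ZModModule.neg_eq_self]

theorem HLk_mulVec_eq_zero_iff {k : ℕ} {c : Fin k ⊕ Fin k → ZMod 2} :
    HLk k *ᵥ c = 0 ↔ c ∘ Sum.inr = Gmat k *ᵥ (c ∘ Sum.inl) := by
  rw [HLk, fromCols_mulVec, one_mulVec, add_eq_zero_iff_eq_of_zmod_two, eq_comm]

theorem GLk_mulVec_eq_zero_iff {k : ℕ} {c : Fin k ⊕ Fin k → ZMod 2} :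
    GLk k *ᵥ c = 0 ↔ c ∘ Sum.inl = Gmat k *ᵥ (c ∘ Sum.inr) := by
  rw [GLk, fromCols_mulVec, one_mulVec, add_eq_zero_iff_eq_of_zmod_two]

theorem HLkp_mulVec_eq_zero_iff {k : ℕ} {u : Fin k ⊕ Fin k ⊕ Fin k → ZMod 2} :
    HLkp k *ᵥ u = 0 ↔
      u ∘ Sum.inr ∘ Sum.inl = Gmat k *ᵥ (u ∘ Sum.inl) ∧ u ∘ Sum.inr ∘ Sum.inr = u ∘ Sum.inl := by
  simp only [HLkp, fromRows_mulVec, fromCols_mulVec, one_mulVec, zero_mulVec, add_zero, zero_add,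
    ← Sum.elim_zero_zero, Sum.elim_eq_iff, add_eq_zero_iff_eq_of_zmod_two]
  exact and_congr eq_comm eq_comm

theorem vecMul_HLk (k : ℕ) (b : Fin k → ZMod 2) :
    b ᵥ* HLk k = Sum.elim (Gmat k *ᵥ b) b := by
  rw [HLk, vecMul_fromCols, vecMul_one, ← mulVec_transpose, Gmat_transpose]

theorem four_le_wt_of_HLk_mulVec_eq_zero {k : ℕ} (hk : 4 ≤ k) {c : Fin k ⊕ Fin k → ZMod 2}
    (hc : HLk k *ᵥ c = 0) (hc0 : c ≠ 0) : 4 ≤ wt c := by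
  rw [HLk_mulVec_eq_zero_iff] at hc
  have ha : c ∘ Sum.inl ≠ 0 := fun h => hc0 <| by
    rw [← Sum.elim_comp_inl_inr c, hc, h, mulVec_zero, Sum.elim_zero_zero]
  rw [← Sum.elim_comp_inl_inr c, wt_sumElim, hc]
  exact four_le_wt_add_wt_Gmat_mulVec hk ha

theorem four_le_wt_of_HLkp_mulVec_eq_zero {k : ℕ} (hk : 4 ≤ k)
    {u : Fin k ⊕ Fin k ⊕ Fin k → ZMod 2} (hu : HLkp k *ᵥ u = 0) (hu0 : u ≠ 0) : 4 ≤ wt u := by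
  obtain ⟨hb, hc⟩ := HLkp_mulVec_eq_zero_iff.mp hu
  have hsplit : u = Sum.elim (u ∘ Sum.inl) (Sum.elim (Gmat k *ᵥ (u ∘ Sum.inl)) (u ∘ Sum.inl)) := by
    ext (i | i | i)
    · rfl
    · exact congrFun hb i
    · exact congrFun hc i
  have ha : u ∘ Sum.inl ≠ 0 := fun h => hu0 <| by
    rw [hsplit, h, mulVec_zero, Sum.elim_zero_zero, Sum.elim_zero_zero]
  rw [hsplit, wt_sumElim, wt_sumElim]
  have := four_le_wt_add_wt_Gmat_mulVec hk ha
  omega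

theorem vecMul_HLk_of_GLk_mulVec_eq_zero {k : ℕ} {c : Fin k ⊕ Fin k → ZMod 2}
    (hc : GLk k *ᵥ c = 0) : (c ∘ Sum.inr) ᵥ* HLk k = c := by
  rw [vecMul_HLk, ← GLk_mulVec_eq_zero_iff.mp hc, Sum.elim_comp_inl_inr]

section RowSpace

variable {R m n : Type*} [CommSemiring R] [Fintype m]

theorem mem_span_range_iff_exists_vecMul {M : Matrix m n R} {v : n → R} :
    v ∈ Submodule.span R (Set.range M) ↔ ∃ y, y ᵥ* M = v := by
  rw [show Set.range M = Set.range M.row from rfl, ← range_vecMulLinear, LinearMap.mem_range]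
  rfl

theorem notMem_span_range_of_mulVec_eq_zero [Fintype n] {M : Matrix m n R} {z v : n → R}
    (hz : M *ᵥ z = 0) (hv : z ⬝ᵥ v ≠ 0) : v ∉ Submodule.span R (Set.range M) := by
  rw [mem_span_range_iff_exists_vecMul]
  rintro ⟨y, rfl⟩
  rw [dotProduct_comm, ← dotProduct_mulVec, hz, dotProduct_zero] at hv
  exact hv rfl

end RowSpace

theorem mul_transpose_eq_zero_iff {R l m n : Type*} [NonUnitalCommSemiring R] [Fintype n]
    {X : Matrix m n R} {A : Matrix l n R} : X * Aᵀ = 0 ↔ ∀ i, A *ᵥ X i = 0 := by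
  simp only [← vecMul_transpose, ← mul_apply_eq_vecMul]
  exact funext_iff

section VecWeight

variable {m n : Type*} [Fintype m] [Fintype n]

theorem wt_row_le_wt_vec (X : Matrix m n (ZMod 2)) (i : m) : wt (X i) ≤ wt (vec X) :=
  wt_le_wt_of_forall_exists Prod.fst fun j hj => ⟨(j, i), hj, rfl⟩

theorem wt_vec_vecMulVec (a : m → ZMod 2) (b : n → ZMod 2) :
    wt (vec (vecMulVec a b)) = wt b * wt a := by
  have hsupp : (Finset.univ.filter fun x => vec (vecMulVec a b) x ≠ 0) =
      (Finset.univ.filter fun j => b j ≠ 0) ×ˢ (Finset.univ.filter fun i => a i ≠ 0) := by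
    ext ⟨j, i⟩
    simp [vecMulVec_apply, and_comm]
  rw [wt, hsupp, Finset.card_product, wt, wt]

theorem vec_vecMulVec_dotProduct_vec_vecMulVec {R : Type*} [CommSemiring R]
    (a c : m → R) (b d : n → R) :
    vec (vecMulVec a b) ⬝ᵥ vec (vecMulVec c d) = (a ⬝ᵥ c) * (b ⬝ᵥ d) := by
  simp only [dotProduct, vec, vecMulVec_apply, Fintype.sum_prod_type, Finset.sum_mul_sum]
  rw [Finset.sum_comm]
  exact Finset.sum_congr rfl fun _ _ => Finset.sum_congr rfl fun _ _ => by ring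

end VecWeight

theorem four_le_wt_of_HXq_mulVec_eq_zero {k : ℕ} (hk : 4 ≤ k)
    {v : (Fin k ⊕ Fin k) × (Fin k ⊕ Fin k ⊕ Fin k) → ZMod 2} (hv : HXq k *ᵥ v = 0)
    (hv0 : v ≠ 0) : 4 ≤ wt v := by
  obtain ⟨X, rfl⟩ := vec_bijective.surjective v
  rw [HXq, kronecker_mulVec_vec, Matrix.one_mul, vec_eq_zero_iff, mul_transpose_eq_zero_iff] at hv
  obtain ⟨q, hq⟩ : ∃ q, X q ≠ 0 := Function.ne_iff.mp (mt vec_eq_zero_iff.mpr hv0)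
  exact (four_le_wt_of_HLk_mulVec_eq_zero hk (hv q) hq).trans (wt_row_le_wt_vec X q)

theorem mem_span_HXq_of_HZq_mulVec_eq_zero {k : ℕ} (hk : 4 ≤ k)
    {w : (Fin k ⊕ Fin k) × (Fin k ⊕ Fin k ⊕ Fin k) → ZMod 2} (hw : HZq k *ᵥ w = 0)
    (hwt : wt w < 4) : w ∈ Submodule.span (ZMod 2) (Set.range (HXq k)) := by
  obtain ⟨X, rfl⟩ := vec_bijective.surjective w
  rw [HZq, kronecker_mulVec_vec, vec_eq_zero_iff, Matrix.mul_assoc, ← transpose_eq_zero,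
    transpose_mul, mul_transpose_eq_zero_iff] at hw
  have hXG : X * (GLk k)ᵀ = 0 := by
    rw [← transpose_eq_zero]
    funext i
    by_contra hi
    have hsupp : wt ((X * (GLk k)ᵀ)ᵀ i) ≤ wt (vec X) := by
      refine wt_le_wt_of_forall_exists Prod.snd fun q hq => ?_
      rw [transpose_apply, mul_apply] at hq
      obtain ⟨j, -, hj⟩ := Finset.exists_ne_zero_of_sum_ne_zero hq
      exact ⟨(j, q), left_ne_zero_of_mul hj, rfl⟩
    have := four_le_wt_of_HLkp_mulVec_eq_zero hk (hw i) hi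
    omega
  rw [mul_transpose_eq_zero_iff] at hXG
  have hX : X = (of fun q i => X q (Sum.inr i)) * HLk k := by
    funext q
    exact (vecMul_HLk_of_GLk_mulVec_eq_zero (hXG q)).symm
  rw [hX, vec_mul_eq_vecMul, ← HXq]
  exact mem_span_range_iff_exists_vecMul.mpr ⟨_, rfl⟩

theorem exists_wt_eq_four_of_HXq_mulVec_eq_zero {k : ℕ} (hk : 2 ≤ k) :
    ∃ v : (Fin k ⊕ Fin k) × (Fin k ⊕ Fin k ⊕ Fin k) → ZMod 2, HXq k *ᵥ v = 0 ∧
      v ∉ Submodule.span (ZMod 2) (Set.range (HZq k)) ∧ wt v = 4 := by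
  let i₀ : Fin k := ⟨0, by omega⟩
  let i₁ : Fin k := ⟨1, by omega⟩
  have hi : i₀ ≠ i₁ := by simp [i₀, i₁, Fin.ext_iff]
  let a : Fin k → ZMod 2 := Pi.single i₀ 1 + Pi.single i₁ 1
  have hc : HLk k *ᵥ Sum.elim a a = 0 :=
    HLk_mulVec_eq_zero_iff.mpr (Gmat_mulVec_single_add_single i₀ i₁).symm
  let e : Fin k → ZMod 2 := Pi.single i₀ 1
  let ℓ : Fin k ⊕ Fin k ⊕ Fin k → ZMod 2 := Sum.elim e (Sum.elim (Gmat k *ᵥ e) e)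
  have hℓ : HLkp k *ᵥ ℓ = 0 := HLkp_mulVec_eq_zero_iff.mpr ⟨rfl, rfl⟩
  refine ⟨vec (vecMulVec (Pi.single (Sum.inl i₀) 1) (Sum.elim a a)), ?_, ?_, ?_⟩
  · rw [HXq, kronecker_mulVec_vec, Matrix.one_mul, vecMulVec_mul, vecMul_transpose, hc]
    ext
    simp [vecMulVec_apply]
  · refine notMem_span_range_of_mulVec_eq_zero
      (z := vec (vecMulVec ℓ (Pi.single (Sum.inl i₀) 1))) ?_ ?_
    · rw [HZq, kronecker_mulVec_vec, mul_vecMulVec, hℓ, zero_vecMulVec, Matrix.zero_mul, vec_zero]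
    · rw [vec_vecMulVec_dotProduct_vec_vecMulVec]
      simp [ℓ, e, a, hi.symm]
  · rw [wt_vec_vecMulVec, wt_sumElim, wt_single_add_single hi, wt_single]

/-- Minimum distance of the quantum code `QL_k` for `k ≥ 4`: every `Z`-logical
representative (in `ker H_X` but not in the row space of `H_Z`) has weight at least 4,
every `X`-logical representative (in `ker H_Z` but not in the row space of `H_X`) has
weight at least 4, and one such vector of weight exactly 4 exists. -/
theorem minDistance_QLk_eq_four (k : ℕ) (hk : 4 ≤ k) :
    (∀ v : (Fin k ⊕ Fin k) × (Fin k ⊕ Fin k ⊕ Fin k) → ZMod 2,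
      Matrix.mulVec (HXq k) v = 0 →
      v ∉ Submodule.span (ZMod 2) (Set.range (HZq k)) → 4 ≤ wt v) ∧
    (∀ w : (Fin k ⊕ Fin k) × (Fin k ⊕ Fin k ⊕ Fin k) → ZMod 2,
      Matrix.mulVec (HZq k) w = 0 →
      w ∉ Submodule.span (ZMod 2) (Set.range (HXq k)) → 4 ≤ wt w) ∧
    ((∃ v : (Fin k ⊕ Fin k) × (Fin k ⊕ Fin k ⊕ Fin k) → ZMod 2,
        Matrix.mulVec (HXq k) v = 0 ∧
        v ∉ Submodule.span (ZMod 2) (Set.range (HZq k)) ∧ wt v = 4) ∨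
      (∃ w : (Fin k ⊕ Fin k) × (Fin k ⊕ Fin k ⊕ Fin k) → ZMod 2,
        Matrix.mulVec (HZq k) w = 0 ∧
        w ∉ Submodule.span (ZMod 2) (Set.range (HXq k)) ∧ wt w = 4)) := by
  refine ⟨fun v hv hvs => four_le_wt_of_HXq_mulVec_eq_zero hk hv ?_, fun w hw hws => ?_,
    Or.inl (exists_wt_eq_four_of_HXq_mulVec_eq_zero (by omega))⟩
  · rintro rfl
    exact hvs (Submodule.zero_mem _)
  · by_contra hlt
    exact hws (mem_span_HXq_of_HZq_mulVec_eq_zero hk hw (not_le.mp hlt))
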